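/- arXiv:2001.06536 — 2 statements merged into one kernel-verified Lean document; each statement's English description precedes it below -/
import Mathlib

section
/- For any satisfiable CNF formula F over n variables with exactly S ≥ 1 solutions, there exists a partial assignment a to a set of exactly ⌈log₂ S⌉ variables such that F restricted by a has exactly one solution. -/
/-!
Fixing a variable on which two remaining solutions differ splits them into two nonempty
classes, the smaller of which has at most half of them; fixing the variable to that side
`⌈log₂ S⌉` times therefore isolates a single solution. Once a solution `α` is isolated by
its values on `A`, it stays isolated by its values on any larger set, which pads `A` to the
exact size.
-/

abbrev Clause (V : Type) : Type := List (V × Bool)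

abbrev CNF (V : Type) : Type := List (Clause V)

def Sat {V : Type} (F : CNF V) (α : V → Bool) : Prop :=
  ∀ C ∈ F, ∃ l ∈ C, α l.1 = l.2

noncomputable def numSol {V : Type} (F : CNF V) : ℕ :=
  Nat.card {α : V → Bool // Sat F α}

open Finset

section Isolation

variable {V : Type*}

def IsolatedOn (s : Finset (V → Bool)) (α : V → Bool) (A : Finset V) : Prop :=
  ∀ β ∈ s, Set.EqOn β α A → β = α

theorem IsolatedOn.mono {s : Finset (V → Bool)} {α : V → Bool} {A B : Finset V}
    (h : IsolatedOn s α A) (hAB : A ⊆ B) : IsolatedOn s α B :=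
  fun β hβ hEq => h β hβ (hEq.mono (coe_subset.mpr hAB))

theorem IsolatedOn.insert_of_filter [DecidableEq V] {s : Finset (V → Bool)} {α : V → Bool}
    {A : Finset V} {w : V} {c : Bool} (h : IsolatedOn (s.filter (· w = c)) α A)
    (hαw : α w = c) : IsolatedOn s α (insert w A) := by
  intro β hβ hEq
  have hβw : β w = c := (hEq (mem_coe.mpr (mem_insert_self w A))).trans hαw
  exact h β (mem_filter.mpr ⟨hβ, hβw⟩) (hEq.mono (coe_subset.mpr (subset_insert w A)))

theorem exists_nonempty_two_mul_card_filter_le {s : Finset (V → Bool)}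
    {α β : V → Bool} (hα : α ∈ s) (hβ : β ∈ s) {w : V} (hw : α w ≠ β w) :
    ∃ c, (s.filter (· w = c)).Nonempty ∧ 2 * #(s.filter (· w = c)) ≤ #s := by
  have hsplit := card_filter_add_card_filter_not (s := s) (· w = α w)
  have hnot : s.filter (fun γ => ¬γ w = α w) = s.filter (· w = β w) := by
    refine filter_congr fun γ _ => ?_
    cases hγ : γ w <;> cases hαw : α w <;> cases hβw : β w <;> simp_all
  rw [hnot] at hsplit
  have hαne : (s.filter (· w = α w)).Nonempty := ⟨α, mem_filter.mpr ⟨hα, rfl⟩⟩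
  have hβne : (s.filter (· w = β w)).Nonempty := ⟨β, mem_filter.mpr ⟨hβ, rfl⟩⟩
  rcases le_total #(s.filter (· w = α w)) #(s.filter (· w = β w)) with hle | hle
  · exact ⟨α w, hαne, by omega⟩
  · exact ⟨β w, hβne, by omega⟩

theorem exists_isolatedOn_empty_of_card_le_one {s : Finset (V → Bool)} (hs : s.Nonempty)
    (hone : #s ≤ 1) : ∃ α ∈ s, IsolatedOn s α ∅ :=
  let ⟨α, hα⟩ := hs
  ⟨α, hα, fun β hβ _ => card_le_one.mp hone β hβ α hα⟩

theorem exists_isolatedOn_card_le [DecidableEq V] (k : ℕ) {s : Finset (V → Bool)}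
    (hs : s.Nonempty) (hk : #s ≤ 2 ^ k) :
    ∃ α ∈ s, ∃ A : Finset V, #A ≤ k ∧ IsolatedOn s α A := by
  induction k generalizing s with
  | zero =>
    obtain ⟨α, hα, hiso⟩ := exists_isolatedOn_empty_of_card_le_one hs (by simpa using hk)
    exact ⟨α, hα, ∅, by simp, hiso⟩
  | succ k ih =>
    by_cases hone : #s ≤ 1
    · obtain ⟨α, hα, hiso⟩ := exists_isolatedOn_empty_of_card_le_one hs hone
      exact ⟨α, hα, ∅, by simp, hiso⟩
    obtain ⟨α₀, hα₀, β₀, hβ₀, hne⟩ := one_lt_card.mp (not_le.mp hone)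
    obtain ⟨w, hw⟩ := Function.ne_iff.mp hne
    obtain ⟨c, hc, hhalf⟩ := exists_nonempty_two_mul_card_filter_le hα₀ hβ₀ hw
    obtain ⟨α, hα, A, hA, hiso⟩ := ih hc (by rw [pow_succ] at hk; omega)
    exact ⟨α, (mem_filter.mp hα).1, insert w A, (card_insert_le w A).trans (by omega),
      hiso.insert_of_filter (mem_filter.mp hα).2⟩

end Isolation

/-- For any satisfiable CNF `F` with `S ≥ 1` solutions there is a partial assignment `a`
(given by a set `A` of exactly `⌈log₂ S⌉` variables together with values `b`)
such that `F` restricted by `a` has exactly one solution, i.e. there is exactly one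
solution of `F` extending `a`. -/
theorem stmt2 (V : Type) [Fintype V] (F : CNF V) (hS : 1 ≤ numSol F) :
    ∃ (A : Finset V) (b : V → Bool),
      A.card = Nat.clog 2 (numSol F) ∧
      ∃! α : V → Bool, Sat F α ∧ ∀ v ∈ A, α v = b v := by
  classical
  set s := univ.filter (Sat F)
  have hcard : numSol F = #s := by
    rw [numSol, Nat.card_eq_fintype_card, Fintype.card_subtype]
  have hclog : Nat.clog 2 #s ≤ Fintype.card V := by
    rw [Nat.clog_le_iff_le_pow one_lt_two]
    simpa using card_le_univ s
  obtain ⟨α, hα, A, hA, hiso⟩ :=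
    exists_isolatedOn_card_le (Nat.clog 2 #s) (card_pos.mp (hcard ▸ hS))
      (Nat.le_pow_clog one_lt_two _)
  obtain ⟨B, hAB, hB⟩ := exists_superset_card_eq hA hclog
  refine ⟨B, α, hcard ▸ hB, α, ⟨(mem_filter.mp hα).2, fun _ _ => rfl⟩, ?_⟩
  rintro β ⟨hβ, hEq⟩
  exact hiso.mono hAB β (mem_filter.mpr ⟨mem_univ β, hβ⟩) hEq
end

section
/- Consider a rooted tree of uniform depth d ≥ 1 in which every internal vertex has at most k-1 children (k ≥ 2), and labels on vertices such that no vertex shares its label with any of its proper ancestors. Assign each label independently a uniform random placement in [n]. For r ∈ [n] and j ∈ [0,d], let φ_j(r) be the probability that a subtree of depth j rooted at a vertex with label y admits a cut A (a set of vertices not containing the subtree root such that every root-to-leaf path meets A exactly once) all of whose labels have placement at most r. Then φ_j(r) ≥ (r/n + (1 - r/n)·φ_{j-1}(r))^(k-1) with φ_0(r) = 0. -/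
/-- Finite rooted labeled trees with labels in `L`. -/
inductive LTree (L : Type) where
  | node : L → List (LTree L) → LTree L

namespace LTree

/-- The label of the root. -/
def labelOf {L : Type} : LTree L → L
  | node y _ => y

/-- The list of child subtrees of the root. -/
def childrenOf {L : Type} : LTree L → List (LTree L)
  | node _ cs => cs

/-- Every vertex has at most `b` children. -/
def branchBound {L : Type} (b : ℕ) : LTree L → Prop
  | node _ cs => cs.length ≤ b ∧ ∀ c ∈ cs.attach, branchBound b c.1
decreasing_by
  simp only [LTree.node.sizeOf_spec]
  have := List.sizeOf_lt_of_mem c.2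
  omega

/-- Every leaf is at depth exactly `d` (the root has depth `0`). -/
def uniformDepth {L : Type} : ℕ → LTree L → Prop
  | 0, node _ cs => cs = []
  | d + 1, node _ cs => cs ≠ [] ∧ ∀ c ∈ cs.attach, uniformDepth d c.1
decreasing_by
  simp only [LTree.node.sizeOf_spec]
  have := List.sizeOf_lt_of_mem c.2
  omega

/-- No vertex shares its label with any of its proper ancestors (starting with the
forbidden set `seen`). -/
def pathDistinct {L : Type} (seen : Finset L) [DecidableEq L] : LTree L → Prop
  | node y cs => y ∉ seen ∧ ∀ c ∈ cs.attach, pathDistinct (insert y seen) c.1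
decreasing_by
  simp only [LTree.node.sizeOf_spec]
  have := List.sizeOf_lt_of_mem c.2
  omega

/-- The tree admits a cut all of whose vertices have labels in `S`: a set of vertices not
containing the root such that every root-to-leaf path meets it exactly once.  Equivalently
(recursively): the root has at least one child, and for each child either its label is in
`S` or its subtree admits such a cut. -/
def hasCut {L : Type} [DecidableEq L] (S : Finset L) : LTree L → Prop
  | node _ cs => cs ≠ [] ∧ ∀ c ∈ cs.attach, (labelOf c.1 ∈ S ∨ hasCut S c.1)
decreasing_by
  simp only [LTree.node.sizeOf_spec]
  have := List.sizeOf_lt_of_mem c.2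
  omega

end LTree

/-- The set of labels whose placement (in `[n] = {1,…,n}`, encoded by `Fin n` via `+1`)
is at most `r`, under the placement assignment `γ`. -/
def smallLabels {L : Type} [Fintype L] [DecidableEq L] {n : ℕ} (γ : L → Fin n) (r : ℕ) :
    Finset L :=
  Finset.univ.filter (fun x => (γ x : ℕ) + 1 ≤ r)

/-- The probability, over independent uniform placements `γ : L → [n]` of the labels, that
the tree `T` admits a cut all of whose labels have placement at most `r`. -/
noncomputable def cutProb {L : Type} [Fintype L] [DecidableEq L] (n : ℕ) (r : ℕ)
    (T : LTree L) : ℝ :=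
  (Nat.card {γ : L → Fin n // LTree.hasCut (smallLabels γ r) T} : ℝ) /
    (n ^ Fintype.card L : ℝ)


/-! The tree has a small cut iff every child `c` of the root satisfies `Q_c`: the label of `c`
is small or the subtree of `c` has a small cut. Each `Q_c` is a decreasing event of the
placement vector, so by the Harris–FKG inequality the probability that all of them hold is at
least the product of their probabilities. Labels along a root-to-leaf path are distinct, so the
placement of the label of `c` is independent of the subtree of `c` having a small cut, whence
`P(Q_c) = r/n + (1 - r/n)·cutProb c`; finally there are at most `k - 1` children. -/

open Finset

noncomputable def uniformProb {α : Type*} (E : α → Prop) : ℝ :=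
  Nat.card {a // E a} / Nat.card α

section UniformProb

variable {α : Type*}

theorem uniformProb_true [Finite α] [Nonempty α] : uniformProb (fun _ : α => True) = 1 := by
  have : (Nat.card α : ℝ) ≠ 0 := by exact_mod_cast Nat.card_pos.ne'
  rw [uniformProb, Nat.card_congr (Equiv.subtypeUnivEquiv fun _ => trivial), div_self this]

theorem uniformProb_not [Finite α] [Nonempty α] (E : α → Prop) :
    uniformProb (fun a => ¬E a) = 1 - uniformProb E := by
  classical
  have := Fintype.ofFinite α
  have hN : (Nat.card α : ℝ) ≠ 0 := by exact_mod_cast Nat.card_pos.ne'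
  simp only [uniformProb, Nat.card_eq_fintype_card, Fintype.card_subtype_compl]
  rw [Nat.cast_sub (Fintype.card_subtype_le E)]
  field_simp

theorem card_eval_and_mul_card {ι β : Type*} [DecidableEq ι] {E : (ι → β) → Prop} {x : ι}
    (hE : ∀ γ v, E (Function.update γ x v) ↔ E γ) (P : β → Prop) :
    Nat.card {γ // P (γ x) ∧ E γ} * Nat.card β = Nat.card {v // P v} * Nat.card {γ // E γ} := by
  rw [← Nat.card_prod, ← Nat.card_prod]
  refine Nat.card_congr
    { toFun := fun p => (⟨p.1.1 x, p.1.2.1⟩, ⟨Function.update p.1.1 x p.2, (hE _ _).2 p.1.2.2⟩)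
      invFun := fun q => (⟨Function.update q.2.1 x q.1.1, by simpa using q.1.2,
          (hE _ _).2 q.2.2⟩, q.2.1 x)
      left_inv := fun p => ?_
      right_inv := fun q => ?_ }
  · ext <;> simp
  · ext <;> simp

theorem uniformProb_eval_and {ι β : Type*} [DecidableEq ι] {E : (ι → β) → Prop} {x : ι}
    (hE : ∀ γ v, E (Function.update γ x v) ↔ E γ) (P : β → Prop) :
    uniformProb (fun γ => P (γ x) ∧ E γ) = uniformProb P * uniformProb E := by
  have hcard := card_eval_and_mul_card hE P
  have hsplit := Nat.card_congr (Equiv.funSplitAt x β)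
  rw [Nat.card_prod] at hsplit
  simp only [uniformProb, hsplit]
  rcases eq_or_ne (Nat.card β) 0 with hb | hb
  · simp [hb]
  · have hb' : (Nat.card β : ℝ) ≠ 0 := by exact_mod_cast hb
    rw [div_mul_div_comm, ← Nat.cast_mul, ← hcard]
    push_cast
    rw [← mul_assoc, mul_comm _ (Nat.card β : ℝ), mul_assoc, mul_div_mul_left _ _ hb']

end UniformProb

section Harris

variable {α : Type*} [DistribLattice α] [Fintype α]

theorem uniformProb_mul_le_uniformProb_and_of_monotone {E F : α → Prop}
    (hE : Monotone E) (hF : Monotone F) :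
    uniformProb E * uniformProb F ≤ uniformProb (fun a => E a ∧ F a) := by
  classical
  have sum_indicator (G : α → Prop) [DecidablePred G] :
      ∑ a, (if G a then (1 : ℝ) else 0) = Nat.card {a // G a} := by
    simp [Finset.sum_boole, Nat.card_eq_fintype_card, Fintype.card_subtype]
  have indicator_mono {G : α → Prop} (hG : Monotone G) :
      Monotone fun a => if G a then (1 : ℝ) else 0 := fun a b hab => by
    by_cases ha : G a
    · simp [ha, hG hab ha]
    · simp only [ha, if_false]; split_ifs <;> norm_num
  have key := fkg (μ := 1) (f := fun a => if E a then (1 : ℝ) else 0)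
    (g := fun a => if F a then (1 : ℝ) else 0) zero_le_one
    (fun a => by dsimp; split_ifs <;> norm_num) (fun a => by dsimp; split_ifs <;> norm_num)
    (indicator_mono hE) (indicator_mono hF) (fun _ _ => le_rfl)
  simp only [Pi.one_apply, one_mul, ite_zero_mul_ite_zero, mul_one, sum_indicator,
    Finset.sum_const, Finset.card_univ, nsmul_eq_mul, ← Nat.card_eq_fintype_card] at key
  rw [uniformProb, uniformProb, uniformProb, div_mul_div_comm]
  rcases (Nat.card α).eq_zero_or_pos with hN | hN
  · rw [hN]
    simp
  · have hN' : (0 : ℝ) < Nat.card α := by exact_mod_cast hN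
    rw [div_le_div_iff₀ (by positivity) hN']
    nlinarith

theorem uniformProb_mul_le_uniformProb_and_of_antitone {E F : α → Prop}
    (hE : Antitone E) (hF : Antitone F) :
    uniformProb E * uniformProb F ≤ uniformProb (fun a => E a ∧ F a) :=
  uniformProb_mul_le_uniformProb_and_of_monotone (α := αᵒᵈ) hE.dual_left hF.dual_left

theorem prod_uniformProb_le_uniformProb_forall_of_antitone [Nonempty α] {ι : Type*}
    {Q : ι → α → Prop} (hQ : ∀ i, Antitone (Q i)) (l : List ι) :
    (l.map fun i => uniformProb (Q i)).prod ≤ uniformProb (fun a => ∀ i ∈ l, Q i a) := by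
  induction l with
  | nil => simp [uniformProb_true]
  | cons i l ih =>
    simp only [List.map_cons, List.prod_cons, List.forall_mem_cons]
    calc uniformProb (Q i) * (l.map fun i => uniformProb (Q i)).prod
        ≤ uniformProb (Q i) * uniformProb (fun a => ∀ j ∈ l, Q j a) := by
          gcongr
          exact div_nonneg (Nat.cast_nonneg _) (Nat.cast_nonneg _)
      _ ≤ _ := uniformProb_mul_le_uniformProb_and_of_antitone (hQ i)
          fun _ _ hab h j hj => hQ j hab (h j hj)

end Harris

namespace LTree

variable {L : Type}

@[induction_eliminator]
theorem induction {motive : LTree L → Prop}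
    (node : ∀ y cs, (∀ c ∈ cs, motive c) → motive (node y cs)) : ∀ T, motive T
  | .node y cs => node y cs fun c _ => induction node c

variable [DecidableEq L]

/-- The paper's event `Q_i` for a child `T`: the root of `T` itself may belong to the cut. -/
def hasCutAtOrBelow (S : Finset L) (T : LTree L) : Prop :=
  labelOf T ∈ S ∨ hasCut S T

theorem hasCut_node_iff {S : Finset L} {y : L} {cs : List (LTree L)} :
    hasCut S (node y cs) ↔ cs ≠ [] ∧ ∀ c ∈ cs, hasCutAtOrBelow S c := by
  rw [hasCut]
  exact and_congr_right fun _ => ⟨fun h c hc => h ⟨c, hc⟩ (List.mem_attach _ _),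
    fun h c _ => h c.1 c.2⟩

theorem pathDistinct_node_iff {seen : Finset L} {y : L} {cs : List (LTree L)} :
    pathDistinct seen (node y cs) ↔ y ∉ seen ∧ ∀ c ∈ cs, pathDistinct (insert y seen) c := by
  rw [pathDistinct]
  exact and_congr_right fun _ => ⟨fun h c hc => h ⟨c, hc⟩ (List.mem_attach _ _),
    fun h c _ => h c.1 c.2⟩

theorem labelOf_notMem_of_pathDistinct {seen : Finset L} {T : LTree L}
    (h : pathDistinct seen T) : labelOf T ∉ seen := by
  cases T
  exact (pathDistinct_node_iff.1 h).1

theorem hasCut_mono (T : LTree L) : Monotone fun S => hasCut S T := by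
  induction T with
  | node y cs ih =>
    intro S S' hSS h
    rw [hasCut_node_iff] at h ⊢
    exact ⟨h.1, fun c hc => (h.2 c hc).imp (@hSS _) (ih c hc hSS)⟩

theorem hasCutAtOrBelow_mono (T : LTree L) : Monotone fun S => hasCutAtOrBelow S T :=
  fun _ _ hSS => Or.imp (@hSS _) (hasCut_mono T hSS)

/-- `hasCut S T` only reads `S` on the labels of proper descendants of the root of `T`, and
these avoid the root label and the labels in `seen`. -/
theorem hasCut_congr {S S' : Finset L} (T : LTree L) {seen : Finset L}
    (hT : pathDistinct seen T) (hS : ∀ z ∉ insert (labelOf T) seen, z ∈ S ↔ z ∈ S') :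
    hasCut S T ↔ hasCut S' T := by
  induction T generalizing seen with
  | node y cs ih =>
    have hcs := (pathDistinct_node_iff.1 hT).2
    simp only [hasCut_node_iff, hasCutAtOrBelow]
    refine and_congr_right fun _ => forall₂_congr fun c hc => ?_
    refine or_congr (hS _ (labelOf_notMem_of_pathDistinct (hcs c hc)))
      (ih c hc (hcs c hc) fun z hz => hS z fun hz' => hz (mem_insert_of_mem hz'))

end LTree

section Placements

open LTree

variable {L : Type} [Fintype L] [DecidableEq L] {n : ℕ}

theorem mem_smallLabels {γ : L → Fin n} {r : ℕ} {x : L} :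
    x ∈ smallLabels γ r ↔ (γ x : ℕ) < r := by
  simp [smallLabels]

theorem smallLabels_antitone (r : ℕ) : Antitone fun γ : L → Fin n => smallLabels γ r :=
  fun _ _ hγ x hx => mem_smallLabels.2 <| (Fin.le_def.1 (hγ x)).trans_lt (mem_smallLabels.1 hx)

theorem uniformProb_val_lt {r : ℕ} (hr : r ≤ n) :
    uniformProb (fun v : Fin n => (v : ℕ) < r) = r / n := by
  classical
  rw [uniformProb, Nat.card_eq_fintype_card, Fintype.card_subtype, Fin.card_filter_val_lt,
    min_eq_right hr, Nat.card_eq_fintype_card, Fintype.card_fin]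

theorem cutProb_eq_uniformProb (r : ℕ) (T : LTree L) :
    cutProb n r T = uniformProb fun γ : L → Fin n => hasCut (smallLabels γ r) T := by
  simp only [cutProb, uniformProb, Nat.card_fun, Nat.card_fin, Nat.card_eq_fintype_card (α := L),
    Nat.cast_pow]

theorem hasCut_smallLabels_update {seen : Finset L} {T : LTree L} (hT : pathDistinct seen T)
    (r : ℕ) (γ : L → Fin n) (v : Fin n) :
    hasCut (smallLabels (Function.update γ (labelOf T) v) r) T ↔ hasCut (smallLabels γ r) T :=
  hasCut_congr T hT fun z hz => by
    rw [mem_smallLabels, mem_smallLabels, Function.update_of_ne]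
    rintro rfl
    exact hz (mem_insert_self _ _)

theorem uniformProb_hasCutAtOrBelow {seen : Finset L} {T : LTree L} (hT : pathDistinct seen T)
    (hn : 0 < n) {r : ℕ} (hr : r ≤ n) :
    uniformProb (fun γ : L → Fin n => hasCutAtOrBelow (smallLabels γ r) T) =
      r / n + (1 - r / n) * cutProb n r T := by
  have : NeZero n := ⟨hn.ne'⟩
  have hcompl := uniformProb_not fun γ : L → Fin n => hasCutAtOrBelow (smallLabels γ r) T
  simp only [hasCutAtOrBelow, not_or, mem_smallLabels] at hcompl
  rw [uniformProb_eval_and (fun γ v => not_congr (hasCut_smallLabels_update hT r γ v))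
      (fun v => ¬(v : ℕ) < r),
    uniformProb_not, uniformProb_not, uniformProb_val_lt hr] at hcompl
  rw [cutProb_eq_uniformProb]
  simp only [hasCutAtOrBelow, mem_smallLabels]
  linear_combination hcompl

end Placements

theorem stmt11_general (L : Type) [Fintype L] [DecidableEq L] (k n r j : ℕ)
    (hn : 0 < n) (hrn : r ≤ n) (hj : 1 ≤ j)
    (T : LTree L)
    (hdepth : T.uniformDepth j)
    (hbr : T.branchBound (k - 1))
    (hpd : T.pathDistinct ∅)
    (φprev : ℝ) (hφ0 : 0 ≤ φprev) (hφ1 : φprev ≤ 1)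
    (hchild : ∀ c ∈ T.childrenOf, φprev ≤ cutProb n r c) :
    ((r : ℝ) / n + (1 - (r : ℝ) / n) * φprev) ^ (k - 1) ≤ cutProb n r T := by
  have : NeZero n := ⟨hn.ne'⟩
  obtain ⟨j, rfl⟩ : ∃ i, j = i + 1 := ⟨j - 1, by omega⟩
  obtain ⟨y, cs⟩ := T
  rw [LTree.uniformDepth] at hdepth
  rw [LTree.branchBound] at hbr
  set x := (r : ℝ) / n + (1 - (r : ℝ) / n) * φprev
  have hp : (r : ℝ) / n ≤ 1 := div_le_one_of_le₀ (by exact_mod_cast hrn) n.cast_nonneg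
  have hx0 : 0 ≤ x := by nlinarith [(by positivity : (0 : ℝ) ≤ r / n)]
  have hx1 : x ≤ 1 := by nlinarith
  have hQ (c : LTree L) (hc : c ∈ cs) :
      x ≤ uniformProb fun γ : L → Fin n => LTree.hasCutAtOrBelow (smallLabels γ r) c := by
    rw [uniformProb_hasCutAtOrBelow ((LTree.pathDistinct_node_iff.1 hpd).2 c hc) hn hrn]
    exact add_le_add le_rfl (mul_le_mul_of_nonneg_left (hchild c hc) (sub_nonneg.2 hp))
  calc x ^ (k - 1) ≤ x ^ cs.length := pow_le_pow_of_le_one hx0 hx1 hbr.1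
    _ = (cs.map fun _ => x).prod := by simp
    _ ≤ (cs.map fun c => uniformProb fun γ : L → Fin n =>
          LTree.hasCutAtOrBelow (smallLabels γ r) c).prod :=
        List.prod_map_le_prod_map₀ _ _ (fun _ _ => hx0) hQ
    _ ≤ uniformProb fun γ : L → Fin n => ∀ c ∈ cs, LTree.hasCutAtOrBelow (smallLabels γ r) c :=
        prod_uniformProb_le_uniformProb_forall_of_antitone
          (fun c => (LTree.hasCutAtOrBelow_mono c).comp_antitone (smallLabels_antitone r)) cs
    _ = cutProb n r (.node y cs) := by
        simp only [cutProb_eq_uniformProb, LTree.hasCut_node_iff, hdepth.1, ne_eq,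
          not_false_eq_true, true_and]

/-- The recurrence `φ_j(r) ≥ (r/n + (1 - r/n)·φ_{j-1}(r))^(k-1)`: if every depth-`(j-1)`
child subtree admits a suitable cut with probability at least `φprev`, then the whole
depth-`j` tree does so with probability at least `(r/n + (1 - r/n)·φprev)^(k-1)`. -/
theorem stmt11 (L : Type) [Fintype L] [DecidableEq L] (k n r j : ℕ)
    (hk : 2 ≤ k) (hn : 0 < n) (hr1 : 1 ≤ r) (hrn : r ≤ n) (hj : 1 ≤ j)
    (T : LTree L)
    (hdepth : T.uniformDepth j)
    (hbr : T.branchBound (k - 1))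
    (hpd : T.pathDistinct ∅)
    (φprev : ℝ) (hφ0 : 0 ≤ φprev) (hφ1 : φprev ≤ 1)
    (hchild : ∀ c ∈ T.childrenOf, φprev ≤ cutProb n r c) :
    ((r : ℝ) / n + (1 - (r : ℝ) / n) * φprev) ^ (k - 1) ≤ cutProb n r T :=
  stmt11_general L k n r j hn hrn hj T hdepth hbr hpd φprev hφ0 hφ1 hchild
end
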